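/- For all n ≥ 1 and 1 ≤ k ≤ n, the number F(n,k) of right-to-left partial Łukasiewicz paths of length n ending at height k whose last step is an up-step satisfies n · F(n,k) = k · C(2n−k−1, n−1). -/

import Mathlib

/-!
Deleting the final up-step identifies these paths with the `P(m, j)` partial Łukasiewicz paths
of length `m = n - 1` ending at height `j = k - 1`. Sorting paths by the height before their last
step gives `P(m + 1, j) = ∑_{j - 1 ≤ i ≤ m} P(m, i)`, and by the hockey-stick identity the ballot
numbers `C(2m - j, m) - C(2m - j, m + 1)` satisfy the same recursion, so they equal `P(m, j)`.
Since `(m + 1) C(2m - j, m + 1) = (m - j) C(2m - j, m)`, this gives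
`(m + 1) P(m, j) = (j + 1) C(2m - j, m)`.
-/

/-- A right-to-left partial Łukasiewicz path of length `n` ending at height `k`:
a list of `n` integer steps, each `≤ 1`, with all partial sums `≥ 0`
and total sum `k`. -/
def IsRLPartialLuk (w : List ℤ) (n k : ℕ) : Prop :=
  w.length = n ∧ (∀ x ∈ w, x ≤ 1) ∧ (∀ i, 0 ≤ (w.take i).sum) ∧ w.sum = k

/-- The last step of the path is an up-step, i.e. `w_n = 1`. -/
def LastStepUp (w : List ℤ) : Prop := w.getLast? = some 1

open Finset

lemma List.forall_take_append_singleton {α : Type*} (P : List α → Prop) (u : List α) (a : α) :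
    (∀ t, P ((u ++ [a]).take t)) ↔ (∀ t, P (u.take t)) ∧ P (u ++ [a]) := by
  constructor
  · intro h
    refine ⟨fun t => ?_, ?_⟩
    · simpa only [← List.take_take, List.take_left'] using h (min t u.length)
    · simpa only [List.take_of_length_le (by simp : (u ++ [a]).length ≤ u.length + 1)]
        using h (u.length + 1)
  · rintro ⟨hu, hua⟩ t
    rcases le_or_gt t u.length with ht | ht
    · rw [List.take_append_of_le_length ht]
      exact hu t
    · rwa [List.take_of_length_le (by simp; omega)]

lemma IsRLPartialLuk.height_le_length {w : List ℤ} {m j : ℕ} (h : IsRLPartialLuk w m j) :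
    j ≤ m := by
  obtain ⟨hlen, hle, -, hsum⟩ := h
  have := w.sum_le_card_nsmul 1 hle
  simp only [hlen, hsum, nsmul_eq_mul, mul_one] at this
  exact_mod_cast this

lemma isRLPartialLuk_zero_iff {w : List ℤ} {j : ℕ} :
    IsRLPartialLuk w 0 j ↔ w = [] ∧ j = 0 := by
  constructor
  · rintro ⟨hlen, -, -, hsum⟩
    obtain rfl := List.length_eq_zero_iff.mp hlen
    exact ⟨rfl, by simpa [eq_comm] using hsum⟩
  · rintro ⟨rfl, rfl⟩
    simp [IsRLPartialLuk]

lemma isRLPartialLuk_append_singleton_iff {u : List ℤ} {a : ℤ} {m j : ℕ} :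
    IsRLPartialLuk (u ++ [a]) (m + 1) j ↔
      ∃ i : ℕ, IsRLPartialLuk u m i ∧ j ≤ i + 1 ∧ a = j - i := by
  simp only [IsRLPartialLuk,
    List.forall_take_append_singleton (fun l : List ℤ => 0 ≤ l.sum) u a,
    List.length_append, List.length_singleton, List.mem_append, List.mem_singleton,
    List.sum_append, List.sum_singleton, add_left_inj]
  constructor
  · rintro ⟨hlen, hle, ⟨hpre, -⟩, hsum⟩
    have hu : 0 ≤ u.sum := by simpa [← hlen] using hpre m
    refine ⟨u.sum.toNat, ⟨hlen, fun x hx => hle x (.inl hx), hpre, by omega⟩, ?_, ?_⟩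
    · have := hle a (.inr rfl)
      omega
    · omega
  · rintro ⟨i, ⟨hlen, hle, hpre, hsum⟩, hji, rfl⟩
    refine ⟨hlen, ?_, ⟨hpre, by omega⟩, by omega⟩
    rintro x (hx | rfl)
    · exact hle x hx
    · omega

lemma isRLPartialLuk_succ_and_lastStepUp_iff {w : List ℤ} {m j : ℕ} :
    IsRLPartialLuk w (m + 1) (j + 1) ∧ LastStepUp w ↔
      ∃ u, IsRLPartialLuk u m j ∧ u ++ [1] = w := by
  constructor
  · rintro ⟨hw, hlast⟩
    obtain ⟨u, rfl⟩ := List.getLast?_eq_some_iff.mp hlast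
    obtain ⟨i, hu, -, hi⟩ := isRLPartialLuk_append_singleton_iff.mp hw
    obtain rfl : i = j := by omega
    exact ⟨u, hu, rfl⟩
  · rintro ⟨u, hu, rfl⟩
    exact ⟨isRLPartialLuk_append_singleton_iff.mpr ⟨j, hu, by omega, by omega⟩,
      List.getLast?_eq_some_iff.mpr ⟨u, rfl⟩⟩

/-- The paths of length `m + 1` ending at `j` are sorted by the height `i ∈ [j - 1, m]` reached
before the last step. -/
def lukPaths : ℕ → ℕ → Finset (List ℤ)
  | 0, j => if j = 0 then {[]} else ∅
  | m + 1, j => (Ico (j - 1) (m + 1)).biUnion fun i => (lukPaths m i).image (· ++ [(j : ℤ) - i])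

lemma mem_lukPaths {m j : ℕ} {w : List ℤ} : w ∈ lukPaths m j ↔ IsRLPartialLuk w m j := by
  induction m generalizing j w with
  | zero => by_cases hj : j = 0 <;> simp [lukPaths, isRLPartialLuk_zero_iff, hj]
  | succ m ih =>
    rcases w.eq_nil_or_concat' with rfl | ⟨u, a, rfl⟩
    · simp [lukPaths, IsRLPartialLuk]
    simp only [lukPaths, mem_biUnion, mem_Ico, mem_image, ih, isRLPartialLuk_append_singleton_iff,
      List.append_singleton_inj]
    constructor
    · rintro ⟨i, ⟨hi, -⟩, v, hv, rfl, rfl⟩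
      exact ⟨i, hv, by omega, rfl⟩
    · rintro ⟨i, hu, hji, rfl⟩
      exact ⟨i, ⟨by omega, Nat.lt_succ_of_le hu.height_le_length⟩, u, hu, rfl, rfl⟩

lemma card_lukPaths_succ (m j : ℕ) :
    #(lukPaths (m + 1) j) = ∑ i ∈ Ico (j - 1) (m + 1), #(lukPaths m i) := by
  rw [lukPaths, card_biUnion]
  · exact sum_congr rfl fun i _ =>
      card_image_of_injective _ fun u v h => List.append_inj_left' h rfl
  · intro x _ y _ hxy
    simp only [Function.onFun, disjoint_left, mem_image]
    rintro _ ⟨u, -, rfl⟩ ⟨v, -, heq⟩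
    rw [List.append_singleton_inj] at heq
    omega

lemma sum_Ico_choose_of_le {a c N : ℕ} (h : a ≤ c) :
    ∑ t ∈ Ico a N, t.choose c = N.choose (c + 1) := by
  cases N with
  | zero => simp
  | succ N =>
    rw [Ico_add_one_right_eq_Icc, ← Nat.sum_Icc_choose]
    refine (sum_subset (Icc_subset_Icc_left h) fun t ht hct => Nat.choose_eq_zero_of_lt ?_).symm
    simp only [mem_Icc] at ht hct
    omega

lemma sum_Ico_choose_two_mul_sub {m c : ℕ} (p : ℕ) (hmc : m ≤ c) :
    ∑ i ∈ Ico p (m + 1), (2 * m - i).choose c = (2 * m + 1 - p).choose (c + 1) := by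
  rw [sum_Ico_reflect (·.choose c) p (by omega : m + 1 ≤ 2 * m + 1),
    show 2 * m + 1 - (m + 1) = m by omega]
  exact sum_Ico_choose_of_le hmc

lemma card_lukPaths_add_choose {m j : ℕ} (hj : j ≤ m) :
    #(lukPaths m j) + (2 * m - j).choose (m + 1) = (2 * m - j).choose m := by
  induction m generalizing j with
  | zero =>
    obtain rfl : j = 0 := by omega
    simp [lukPaths]
  | succ m ih =>
    have hsum : #(lukPaths (m + 1) j) + (2 * m + 1 - (j - 1)).choose (m + 1 + 1) =
        (2 * m + 1 - (j - 1)).choose (m + 1) := by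
      rw [card_lukPaths_succ, ← sum_Ico_choose_two_mul_sub _ (by omega : m ≤ m + 1),
        ← sum_Ico_choose_two_mul_sub _ le_rfl, ← sum_add_distrib]
      exact sum_congr rfl fun i hi => ih (by simp only [mem_Ico] at hi; omega)
    rcases j with _ | j
    · -- `0 - 1` truncates to `0`, so the sums produce `C(2m + 1, ·)`; Pascal's rule turns
      -- them into `C(2m + 2, ·)`
      rw [Nat.sub_zero, show 2 * (m + 1) = 2 * m + 1 + 1 by ring, Nat.choose_succ_succ' _ m,
        Nat.choose_succ_succ' _ (m + 1), ← Nat.choose_symm_half]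
      simp only [zero_tsub, tsub_zero] at hsum
      omega
    · rwa [show 2 * m + 1 - (j + 1 - 1) = 2 * (m + 1) - (j + 1) by omega] at hsum

lemma succ_mul_card_lukPaths {m j : ℕ} (hj : j ≤ m) :
    (m + 1) * #(lukPaths m j) = (j + 1) * (2 * m - j).choose m := by
  have hballot := card_lukPaths_add_choose hj
  have hnext := Nat.choose_succ_right_eq (2 * m - j) m
  rw [show 2 * m - j - m = m - j by omega] at hnext
  zify [hj] at hballot hnext ⊢
  linear_combination (m + 1 : ℤ) * hballot - hnext

lemma card_lastStepUp_eq_card_lukPaths (m j : ℕ) :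
    Nat.card {w : List ℤ // IsRLPartialLuk w (m + 1) (j + 1) ∧ LastStepUp w} =
      #(lukPaths m j) := by
  have happend : Function.Injective (· ++ [(1 : ℤ)]) := fun u v h => List.append_inj_left' h rfl
  rw [← card_image_of_injective _ happend, ← Nat.card_eq_finsetCard]
  exact Nat.card_congr <| Equiv.subtypeEquivRight fun w => by
    simp [isRLPartialLuk_succ_and_lastStepUp_iff, mem_lukPaths]

theorem rlPartialLuk_lastUp_count (n k : ℕ) (hk1 : 1 ≤ k) (hk : k ≤ n) :
    n * Nat.card {w : List ℤ // IsRLPartialLuk w n k ∧ LastStepUp w} =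
      k * Nat.choose (2 * n - k - 1) (n - 1) := by
  obtain ⟨m, rfl⟩ : ∃ m, n = m + 1 := ⟨n - 1, by omega⟩
  obtain ⟨j, rfl⟩ : ∃ j, k = j + 1 := ⟨k - 1, by omega⟩
  rw [card_lastStepUp_eq_card_lukPaths, show 2 * (m + 1) - (j + 1) - 1 = 2 * m - j by omega,
    Nat.add_sub_cancel]
  exact succ_mul_card_lukPaths (by omega)
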